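/- Let Ã ∈ ℂ^{m×n} be of the 3×3 block form Ã = [[Σ̂₁, 0, R₁],[0, Σ̂₂, R₂],[S₁, S₂, A₃]] as described, and let (Σ₁, Ũ₁, Ṽ₁) be exact singular triplets: ÃṼ₁ = Ũ₁Σ₁ and Ã*Ũ₁ = Ṽ₁Σ₁, with Ũ₁, Ṽ₁ having orthonormal columns and Σ₁ real diagonal with positive diagonal entries, partitioned conformally as Ũ₁ = (Ũ₁₁; Ũ₂₁; Ũ₃₁), Ṽ₁ = (Ṽ₁₁; Ṽ₂₁; Ṽ₃₁). Assume gap := σ_min(Σ₁) − ‖Σ̂₂‖ > 0 and Gap := σ_min(Σ₁) − ‖A₃‖ > max(‖S₂‖, ‖R₂‖)²/gap. Then max(‖[Ũ₂₁; Ũ₃₁]‖, ‖[Ṽ₂₁; Ṽ₃₁]‖) ≤ (max(‖S₁‖, ‖R₁‖) / (Gap − max(‖S₂‖, ‖R₂‖)²/gap)) · (1 + max(‖R₂‖, ‖S₂‖)/gap). -/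

import Mathlib

open Matrix
open scoped Matrix.Norms.L2Operator

/-!
Restricting `ÃṼ₁ = Ũ₁Σ₁` and `Ã*Ũ₁ = Ṽ₁Σ₁` to the second and third block rows and using
`‖XΣ₁‖ ≥ σ_min(Σ₁)‖X‖` gives, for `x = max(‖Ũ₂₁‖, ‖Ṽ₂₁‖)` and `y = max(‖Ũ₃₁‖, ‖Ṽ₃₁‖)`, the coupled
inequalities `gap·x ≤ τ·y` and `Gap·y ≤ s + τ·x` with `τ = max(‖S₂‖, ‖R₂‖)`, `s = max(‖S₁‖, ‖R₁‖)`
(the blocks `Ũ₁₁`, `Ṽ₁₁` are contractions). Eliminating `x` bounds `y` by `s / (Gap − τ²/gap)`, and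
the stacked lower blocks have norm at most `x + y ≤ y·(1 + τ/gap)`.
-/

lemma add_le_of_coupled_gap_bounds {gap Gap τ s x y : ℝ} (hgap : 0 < gap) (hτ : 0 ≤ τ)
    (hGap : τ ^ 2 / gap < Gap) (hx : gap * x ≤ τ * y) (hy : Gap * y ≤ s + τ * x) :
    x + y ≤ s / (Gap - τ ^ 2 / gap) * (1 + τ / gap) := by
  have hx' : x ≤ τ * y / gap := by rw [le_div_iff₀ hgap]; linarith
  have hy' : y ≤ s / (Gap - τ ^ 2 / gap) := by
    rw [le_div_iff₀ (sub_pos.mpr hGap)]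
    have : τ * x ≤ τ * (τ * y / gap) := mul_le_mul_of_nonneg_left hx' hτ
    calc y * (Gap - τ ^ 2 / gap) = Gap * y - τ * (τ * y / gap) := by ring
      _ ≤ s := by linarith
  calc x + y ≤ τ * y / gap + y := by linarith
    _ = y * (1 + τ / gap) := by ring
    _ ≤ s / (Gap - τ ^ 2 / gap) * (1 + τ / gap) := by gcongr

namespace Matrix

section L2OpNorm

variable {𝕜 : Type*} [RCLike 𝕜] {l m n : Type*} [Fintype l] [Fintype m] [Fintype n] [DecidableEq n]

lemma l2_opNorm_eq_of_conjTranspose_mul_self_eq {A : Matrix m n 𝕜} {B : Matrix l n 𝕜}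
    (h : Aᴴ * A = Bᴴ * B) : ‖A‖ = ‖B‖ := by
  have hsq : ‖A‖ * ‖A‖ = ‖B‖ * ‖B‖ := by
    rw [← l2_opNorm_conjTranspose_mul_self, ← l2_opNorm_conjTranspose_mul_self, h]
  exact (mul_self_inj (norm_nonneg A) (norm_nonneg B)).mp hsq

lemma l2_opNorm_le_one_of_conjTranspose_mul_self_eq_one {A : Matrix m n 𝕜}
    (hA : Aᴴ * A = 1) : ‖A‖ ≤ 1 := by
  rw [l2_opNorm_eq_of_conjTranspose_mul_self_eq (B := (1 : Matrix n n 𝕜)) (by simp [hA]),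
    ← diagonal_one, l2_opNorm_diagonal]
  exact (pi_norm_le_iff_of_nonneg zero_le_one).mpr fun _ => by simp

lemma l2_opNorm_submatrix_le [DecidableEq l] [DecidableEq m] {e : l → m}
    (he : Function.Injective e) (A : Matrix m n 𝕜) : ‖A.submatrix e id‖ ≤ ‖A‖ := by
  set P : Matrix l m 𝕜 := (1 : Matrix m m 𝕜).submatrix e id
  have hP : Pᴴᴴ * Pᴴ = 1 := by
    rw [conjTranspose_conjTranspose, conjTranspose_submatrix, conjTranspose_one,
      ← submatrix_mul _ _ _ _ _ Function.bijective_id, one_mul, submatrix_one e he]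
  calc ‖A.submatrix e id‖ = ‖P * A‖ := by
        rw [← Matrix.one_mul A, submatrix_mul _ _ _ _ _ Function.bijective_id, submatrix_id_id,
          Matrix.one_mul]
    _ ≤ ‖P‖ * ‖A‖ := l2_opNorm_mul _ _
    _ ≤ ‖A‖ := by
        rw [← l2_opNorm_conjTranspose P]
        exact mul_le_of_le_one_left (norm_nonneg A)
          (l2_opNorm_le_one_of_conjTranspose_mul_self_eq_one hP)

lemma l2_opNorm_fromRows_le (A₁ : Matrix m n 𝕜) (A₂ : Matrix l n 𝕜) :
    ‖fromRows A₁ A₂‖ ≤ ‖A₁‖ + ‖A₂‖ := by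
  have hsplit : fromRows A₁ A₂ = fromRows A₁ 0 + fromRows 0 A₂ := by
    ext (i | i) j <;> simp
  have h₁ : ‖fromRows A₁ (0 : Matrix l n 𝕜)‖ = ‖A₁‖ :=
    l2_opNorm_eq_of_conjTranspose_mul_self_eq <| by
      simp [conjTranspose_fromRows_eq_fromCols_conjTranspose, fromCols_mul_fromRows]
  have h₂ : ‖fromRows (0 : Matrix m n 𝕜) A₂‖ = ‖A₂‖ :=
    l2_opNorm_eq_of_conjTranspose_mul_self_eq <| by
      simp [conjTranspose_fromRows_eq_fromCols_conjTranspose, fromCols_mul_fromRows]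
  rw [hsplit, ← h₁, ← h₂]
  exact norm_add_le _ _

lemma l2_opNorm_submatrix_sumElim_le {p : Type*} (e₁ : l → p) (e₂ : m → p) (A : Matrix p n 𝕜) :
    ‖A.submatrix (Sum.elim e₁ e₂) id‖ ≤ ‖A.submatrix e₁ id‖ + ‖A.submatrix e₂ id‖ := by
  have h : A.submatrix (Sum.elim e₁ e₂) id = fromRows (A.submatrix e₁ id) (A.submatrix e₂ id) := by
    ext (i | i) j <;> rfl
  exact h ▸ l2_opNorm_fromRows_le _ _

lemma mul_l2_opNorm_le_l2_opNorm_mul_diagonal {c : ℝ} (hc : 0 < c)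
    {d : n → ℝ} (hd : ∀ i, c ≤ d i) (A : Matrix m n 𝕜) :
    c * ‖A‖ ≤ ‖A * diagonal (fun i => (d i : 𝕜))‖ := by
  have hd₀ : ∀ i, (d i : 𝕜) ≠ 0 := fun i => by exact_mod_cast (hc.trans_le (hd i)).ne'
  have hinv : ‖diagonal (fun i => ((d i : 𝕜))⁻¹)‖ ≤ c⁻¹ := by
    rw [l2_opNorm_diagonal]
    refine (pi_norm_le_iff_of_nonneg (inv_nonneg.mpr hc.le)).mpr fun i => ?_
    rw [norm_inv, RCLike.norm_ofReal, abs_of_pos (hc.trans_le (hd i))]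
    exact inv_anti₀ hc (hd i)
  have hA : A = A * diagonal (fun i => (d i : 𝕜)) * diagonal (fun i => ((d i : 𝕜))⁻¹) := by
    simp [Matrix.mul_assoc, mul_inv_cancel₀ (hd₀ _)]
  calc c * ‖A‖ ≤ c * (‖A * diagonal (fun i => (d i : 𝕜))‖ * c⁻¹) := by
        gcongr
        conv_lhs => rw [hA]
        exact (l2_opNorm_mul _ _).trans (by gcongr)
    _ = ‖A * diagonal (fun i => (d i : 𝕜))‖ := by field_simp

end L2OpNorm

section BlockAlgebra

variable {α : Type*} {a₁ a₂ a₃ b₁ b₂ b₃ k : Type*}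

lemma conjTranspose_fromBlocks_fromBlocks [AddMonoid α] [StarAddMonoid α] (D : Matrix a₁ b₁ α)
    (T : Matrix a₂ b₂ α) (R : Matrix (a₁ ⊕ a₂) b₃ α) (S : Matrix a₃ (b₁ ⊕ b₂) α)
    (A₃ : Matrix a₃ b₃ α) :
    (fromBlocks (fromBlocks D 0 0 T) R S A₃)ᴴ = fromBlocks (fromBlocks Dᴴ 0 0 Tᴴ) Sᴴ Rᴴ A₃ᴴ := by
  simp [fromBlocks_conjTranspose]

lemma fromBlocks_fromBlocks_mul_submatrix_inl_inr [NonUnitalNonAssocSemiring α] [Fintype b₁]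
    [Fintype b₂] [Fintype b₃] (D : Matrix a₁ b₁ α) (T : Matrix a₂ b₂ α)
    (R : Matrix (a₁ ⊕ a₂) b₃ α) (S : Matrix a₃ (b₁ ⊕ b₂) α) (A₃ : Matrix a₃ b₃ α)
    (W : Matrix ((b₁ ⊕ b₂) ⊕ b₃) k α) :
    (fromBlocks (fromBlocks D 0 0 T) R S A₃ * W).submatrix (Sum.inl ∘ Sum.inr) id =
      T * W.submatrix (Sum.inl ∘ Sum.inr) id + R.submatrix Sum.inr id * W.submatrix Sum.inr id := by
  ext i j
  simp [mul_apply, Fintype.sum_sum_type]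

lemma fromBlocks_mul_submatrix_inr [NonUnitalNonAssocSemiring α] [Fintype b₁] [Fintype b₂]
    [Fintype b₃] (B : Matrix (a₁ ⊕ a₂) (b₁ ⊕ b₂) α)
    (R : Matrix (a₁ ⊕ a₂) b₃ α) (S : Matrix a₃ (b₁ ⊕ b₂) α) (A₃ : Matrix a₃ b₃ α)
    (W : Matrix ((b₁ ⊕ b₂) ⊕ b₃) k α) :
    (fromBlocks B R S A₃ * W).submatrix Sum.inr id =
      S.submatrix id Sum.inl * W.submatrix (Sum.inl ∘ Sum.inl) id
        + S.submatrix id Sum.inr * W.submatrix (Sum.inl ∘ Sum.inr) id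
        + A₃ * W.submatrix Sum.inr id := by
  ext i j
  simp [mul_apply, Fintype.sum_sum_type, add_assoc]

end BlockAlgebra

section BlockNorms

variable {𝕜 : Type*} [RCLike 𝕜] {a₁ a₂ a₃ b₁ b₂ b₃ k : Type*}
  [Fintype b₁] [Fintype b₂] [Fintype b₃] [Fintype k]
  [DecidableEq b₂] [DecidableEq b₃] [DecidableEq k]
  {D : Matrix a₁ b₁ 𝕜} {T : Matrix a₂ b₂ 𝕜} {R : Matrix (a₁ ⊕ a₂) b₃ 𝕜}
  {S : Matrix a₃ (b₁ ⊕ b₂) 𝕜} {A₃ : Matrix a₃ b₃ 𝕜}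
  {W : Matrix ((b₁ ⊕ b₂) ⊕ b₃) k 𝕜} {Z : Matrix ((a₁ ⊕ a₂) ⊕ a₃) k 𝕜} {d : k → ℝ} {c : ℝ}

lemma mul_l2_opNorm_submatrix_inl_inr_le [Fintype a₂]
    (hAW : fromBlocks (fromBlocks D 0 0 T) R S A₃ * W = Z * diagonal (fun i => (d i : 𝕜)))
    (hc : 0 < c) (hd : ∀ i, c ≤ d i) :
    c * ‖Z.submatrix (Sum.inl ∘ Sum.inr) id‖ ≤
      ‖T‖ * ‖W.submatrix (Sum.inl ∘ Sum.inr) id‖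
        + ‖R.submatrix Sum.inr id‖ * ‖W.submatrix Sum.inr id‖ := by
  calc c * ‖Z.submatrix (Sum.inl ∘ Sum.inr) id‖
      ≤ ‖Z.submatrix (Sum.inl ∘ Sum.inr) id * diagonal (fun i => (d i : 𝕜))‖ :=
        mul_l2_opNorm_le_l2_opNorm_mul_diagonal hc hd _
    _ = ‖T * W.submatrix (Sum.inl ∘ Sum.inr) id
          + R.submatrix Sum.inr id * W.submatrix Sum.inr id‖ := by
        rw [← fromBlocks_fromBlocks_mul_submatrix_inl_inr D, hAW,
          submatrix_mul _ _ _ _ _ Function.bijective_id, submatrix_id_id]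
    _ ≤ _ := (norm_add_le _ _).trans (add_le_add (l2_opNorm_mul _ _) (l2_opNorm_mul _ _))

lemma mul_l2_opNorm_submatrix_inr_le [Fintype a₃] [DecidableEq b₁]
    {B : Matrix (a₁ ⊕ a₂) (b₁ ⊕ b₂) 𝕜}
    (hAW : fromBlocks B R S A₃ * W = Z * diagonal (fun i => (d i : 𝕜)))
    (hc : 0 < c) (hd : ∀ i, c ≤ d i) :
    c * ‖Z.submatrix Sum.inr id‖ ≤
      ‖S.submatrix id Sum.inl‖ * ‖W.submatrix (Sum.inl ∘ Sum.inl) id‖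
        + ‖S.submatrix id Sum.inr‖ * ‖W.submatrix (Sum.inl ∘ Sum.inr) id‖
        + ‖A₃‖ * ‖W.submatrix Sum.inr id‖ := by
  calc c * ‖Z.submatrix Sum.inr id‖
      ≤ ‖Z.submatrix Sum.inr id * diagonal (fun i => (d i : 𝕜))‖ :=
        mul_l2_opNorm_le_l2_opNorm_mul_diagonal hc hd _
    _ = ‖S.submatrix id Sum.inl * W.submatrix (Sum.inl ∘ Sum.inl) id
          + S.submatrix id Sum.inr * W.submatrix (Sum.inl ∘ Sum.inr) id
          + A₃ * W.submatrix Sum.inr id‖ := by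
        rw [← fromBlocks_mul_submatrix_inr B, hAW,
          submatrix_mul _ _ _ _ _ Function.bijective_id, submatrix_id_id]
    _ ≤ _ := (norm_add_le _ _).trans (add_le_add ((norm_add_le _ _).trans
          (add_le_add (l2_opNorm_mul _ _) (l2_opNorm_mul _ _))) (l2_opNorm_mul _ _))

end BlockNorms

section SingularPairs

variable {𝕜 : Type*} [RCLike 𝕜] {a₁ a₂ a₃ b₁ b₂ b₃ k : Type*}
  [Fintype a₁] [Fintype a₂] [Fintype a₃] [DecidableEq a₁] [DecidableEq a₂] [DecidableEq a₃]
  [Fintype b₁] [Fintype b₂] [Fintype b₃] [DecidableEq b₁] [DecidableEq b₂] [DecidableEq b₃]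
  [Fintype k] [DecidableEq k]
  {D : Matrix a₁ b₁ 𝕜} {T : Matrix a₂ b₂ 𝕜} {R : Matrix (a₁ ⊕ a₂) b₃ 𝕜}
  {S : Matrix a₃ (b₁ ⊕ b₂) 𝕜} {A₃ : Matrix a₃ b₃ 𝕜}

theorem max_norm_lower_blocks_le_of_singular_pairs
    {U : Matrix ((a₁ ⊕ a₂) ⊕ a₃) k 𝕜} {V : Matrix ((b₁ ⊕ b₂) ⊕ b₃) k 𝕜} {d : k → ℝ} {c : ℝ}
    (hU : Uᴴ * U = 1) (hV : Vᴴ * V = 1)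
    (hAV : fromBlocks (fromBlocks D 0 0 T) R S A₃ * V = U * diagonal (fun i => (d i : 𝕜)))
    (hAU : (fromBlocks (fromBlocks D 0 0 T) R S A₃)ᴴ * U = V * diagonal (fun i => (d i : 𝕜)))
    (hd : ∀ i, c ≤ d i) (hgap : 0 < c - ‖T‖)
    (hGap : max ‖S.submatrix id Sum.inr‖ ‖R.submatrix Sum.inr id‖ ^ 2 / (c - ‖T‖) < c - ‖A₃‖) :
    max ‖U.submatrix (Sum.elim (Sum.inl ∘ Sum.inr) Sum.inr) id‖
        ‖V.submatrix (Sum.elim (Sum.inl ∘ Sum.inr) Sum.inr) id‖ ≤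
      max ‖S.submatrix id Sum.inl‖ ‖R.submatrix Sum.inl id‖ /
          (c - ‖A₃‖ - max ‖S.submatrix id Sum.inr‖ ‖R.submatrix Sum.inr id‖ ^ 2 / (c - ‖T‖)) *
        (1 + max ‖S.submatrix id Sum.inr‖ ‖R.submatrix Sum.inr id‖ / (c - ‖T‖)) := by
  have hc : 0 < c := by linarith [norm_nonneg T]
  -- `Aᴴ` has the same block shape as `A`, with the roles of `R` and `S` exchanged.
  rw [conjTranspose_fromBlocks_fromBlocks] at hAU
  have hU₂ := mul_l2_opNorm_submatrix_inl_inr_le hAV hc hd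
  have hU₃ := mul_l2_opNorm_submatrix_inr_le hAV hc hd
  have hV₂ := mul_l2_opNorm_submatrix_inl_inr_le hAU hc hd
  have hV₃ := mul_l2_opNorm_submatrix_inr_le hAU hc hd
  simp only [← conjTranspose_submatrix, l2_opNorm_conjTranspose] at hV₂ hV₃
  have hU₁ : ‖U.submatrix (Sum.inl ∘ Sum.inl) id‖ ≤ 1 :=
    (l2_opNorm_submatrix_le (Sum.inl_injective.comp Sum.inl_injective) U).trans
      (l2_opNorm_le_one_of_conjTranspose_mul_self_eq_one hU)
  have hV₁ : ‖V.submatrix (Sum.inl ∘ Sum.inl) id‖ ≤ 1 :=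
    (l2_opNorm_submatrix_le (Sum.inl_injective.comp Sum.inl_injective) V).trans
      (l2_opNorm_le_one_of_conjTranspose_mul_self_eq_one hV)
  set s := max ‖S.submatrix id Sum.inl‖ ‖R.submatrix Sum.inl id‖
  set τ := max ‖S.submatrix id Sum.inr‖ ‖R.submatrix Sum.inr id‖
  set x := max ‖U.submatrix (Sum.inl ∘ Sum.inr) id‖ ‖V.submatrix (Sum.inl ∘ Sum.inr) id‖
  set y := max ‖U.submatrix Sum.inr id‖ ‖V.submatrix Sum.inr id‖
  have hτ : 0 ≤ τ := (norm_nonneg _).trans (le_max_left _ _)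
  have hx : (c - ‖T‖) * x ≤ τ * y := by
    rw [sub_mul, sub_le_iff_le_add', mul_max_of_nonneg _ _ hc.le]
    refine max_le (hU₂.trans ?_) (hV₂.trans ?_) <;> gcongr <;>
      first | exact le_max_left _ _ | exact le_max_right _ _
  have hy : (c - ‖A₃‖) * y ≤ s + τ * x := by
    rw [sub_mul, sub_le_iff_le_add, mul_max_of_nonneg _ _ hc.le]
    have hS₁ : ‖S.submatrix id Sum.inl‖ * ‖V.submatrix (Sum.inl ∘ Sum.inl) id‖ ≤ s :=
      (mul_le_of_le_one_right (norm_nonneg _) hV₁).trans (le_max_left _ _)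
    have hR₁ : ‖R.submatrix Sum.inl id‖ * ‖U.submatrix (Sum.inl ∘ Sum.inl) id‖ ≤ s :=
      (mul_le_of_le_one_right (norm_nonneg _) hU₁).trans (le_max_right _ _)
    refine max_le (hU₃.trans ?_) (hV₃.trans ?_) <;> gcongr <;>
      first | assumption | exact le_max_left _ _ | exact le_max_right _ _
  calc _ ≤ x + y := max_le
        ((l2_opNorm_submatrix_sumElim_le _ _ U).trans
          (add_le_add (le_max_left _ _) (le_max_left _ _)))
        ((l2_opNorm_submatrix_sumElim_le _ _ V).trans
          (add_le_add (le_max_right _ _) (le_max_right _ _)))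
    _ ≤ _ := add_le_of_coupled_gap_bounds hgap hτ hGap hx hy

end SingularPairs

end Matrix

theorem svd_subspace_refined_bound_general
    {m n k₁ km kn : ℕ}
    (σ1hat : Fin k₁ → ℝ)
    (Sig2hat : Matrix (Fin (km - k₁)) (Fin (kn - k₁)) ℂ)
    (R : Matrix (Fin k₁ ⊕ Fin (km - k₁)) (Fin (n - kn)) ℂ)
    (S : Matrix (Fin (m - km)) (Fin k₁ ⊕ Fin (kn - k₁)) ℂ)
    (A3 : Matrix (Fin (m - km)) (Fin (n - kn)) ℂ)
    (U : Matrix ((Fin k₁ ⊕ Fin (km - k₁)) ⊕ Fin (m - km)) (Fin k₁) ℂ)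
    (V : Matrix ((Fin k₁ ⊕ Fin (kn - k₁)) ⊕ Fin (n - kn)) (Fin k₁) ℂ)
    (hU : Uᴴ * U = 1) (hV : Vᴴ * V = 1)
    (σ1 : Fin k₁ → ℝ)
    (hAV :
      (Matrix.fromBlocks
          (Matrix.fromBlocks (Matrix.diagonal fun i => Complex.ofReal (σ1hat i)) 0 0 Sig2hat)
          R S A3) * V = U * Matrix.diagonal fun i => Complex.ofReal (σ1 i))
    (hAU :
      (Matrix.fromBlocks
          (Matrix.fromBlocks (Matrix.diagonal fun i => Complex.ofReal (σ1hat i)) 0 0 Sig2hat)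
          R S A3)ᴴ * U = V * Matrix.diagonal fun i => Complex.ofReal (σ1 i))
    (Gap gap : ℝ)
    (hGapDef : Gap = (⨅ i, σ1 i) - ‖A3‖)
    (hgapDef : gap = (⨅ i, σ1 i) - ‖Sig2hat‖)
    (hgap : 0 < gap)
    (hGap : max ‖S.submatrix id Sum.inr‖ ‖R.submatrix Sum.inr id‖ ^ 2 / gap < Gap) :
    max ‖U.submatrix (Sum.elim (fun i => Sum.inl (Sum.inr i)) Sum.inr) id‖
        ‖V.submatrix (Sum.elim (fun i => Sum.inl (Sum.inr i)) Sum.inr) id‖ ≤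
      (max ‖S.submatrix id Sum.inl‖ ‖R.submatrix Sum.inl id‖ /
          (Gap - max ‖S.submatrix id Sum.inr‖ ‖R.submatrix Sum.inr id‖ ^ 2 / gap)) *
        (1 + max ‖R.submatrix Sum.inr id‖ ‖S.submatrix id Sum.inr‖ / gap) := by
  subst hGapDef hgapDef
  rw [max_comm ‖R.submatrix Sum.inr id‖]
  exact max_norm_lower_blocks_le_of_singular_pairs hU hV hAV hAU
    (fun i => ciInf_le (Set.finite_range σ1).bddBelow i) hgap hGap

/-- Theorem 6.1, bound (6.3) of the paper: if `Gap > max(‖S₂‖,‖R₂‖)²/gap`, then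
`max(‖[Ũ₂₁;Ũ₃₁]‖, ‖[Ṽ₂₁;Ṽ₃₁]‖)
  ≤ (max(‖S₁‖,‖R₁‖)/(Gap − max(‖S₂‖,‖R₂‖)²/gap))·(1 + max(‖R₂‖,‖S₂‖)/gap)`. -/
theorem svd_subspace_refined_bound
    {m n k₁ km kn : ℕ} (hmn : n ≤ m) (hk₁ : 1 ≤ k₁)
    (hk₁km : k₁ ≤ km) (hkmm : km ≤ m) (hk₁kn : k₁ ≤ kn) (hknn : kn ≤ n)
    (σ1hat : Fin k₁ → ℝ) (hσ1hat : ∀ i, 0 ≤ σ1hat i)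
    (Sig2hat : Matrix (Fin (km - k₁)) (Fin (kn - k₁)) ℂ)
    (hSig2off : ∀ (i : Fin (km - k₁)) (j : Fin (kn - k₁)), (i : ℕ) ≠ (j : ℕ) → Sig2hat i j = 0)
    (hSig2diag : ∀ (i : Fin (km - k₁)) (j : Fin (kn - k₁)), (i : ℕ) = (j : ℕ) →
      ∃ r : ℝ, 0 ≤ r ∧ Sig2hat i j = (r : ℂ))
    (R : Matrix (Fin k₁ ⊕ Fin (km - k₁)) (Fin (n - kn)) ℂ)
    (S : Matrix (Fin (m - km)) (Fin k₁ ⊕ Fin (kn - k₁)) ℂ)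
    (A3 : Matrix (Fin (m - km)) (Fin (n - kn)) ℂ)
    (U : Matrix ((Fin k₁ ⊕ Fin (km - k₁)) ⊕ Fin (m - km)) (Fin k₁) ℂ)
    (V : Matrix ((Fin k₁ ⊕ Fin (kn - k₁)) ⊕ Fin (n - kn)) (Fin k₁) ℂ)
    (hU : Uᴴ * U = 1) (hV : Vᴴ * V = 1)
    (σ1 : Fin k₁ → ℝ) (hσ1 : ∀ i, 0 < σ1 i)
    (hAV :
      (Matrix.fromBlocks
          (Matrix.fromBlocks (Matrix.diagonal fun i => Complex.ofReal (σ1hat i)) 0 0 Sig2hat)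
          R S A3) * V = U * Matrix.diagonal fun i => Complex.ofReal (σ1 i))
    (hAU :
      (Matrix.fromBlocks
          (Matrix.fromBlocks (Matrix.diagonal fun i => Complex.ofReal (σ1hat i)) 0 0 Sig2hat)
          R S A3)ᴴ * U = V * Matrix.diagonal fun i => Complex.ofReal (σ1 i))
    (Gap gap : ℝ)
    (hGapDef : Gap = (⨅ i, σ1 i) - ‖A3‖)
    (hgapDef : gap = (⨅ i, σ1 i) - ‖Sig2hat‖)
    (hgap : 0 < gap)
    (hGap : max ‖S.submatrix id Sum.inr‖ ‖R.submatrix Sum.inr id‖ ^ 2 / gap < Gap) :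
    max ‖U.submatrix (Sum.elim (fun i => Sum.inl (Sum.inr i)) Sum.inr) id‖
        ‖V.submatrix (Sum.elim (fun i => Sum.inl (Sum.inr i)) Sum.inr) id‖ ≤
      (max ‖S.submatrix id Sum.inl‖ ‖R.submatrix Sum.inl id‖ /
          (Gap - max ‖S.submatrix id Sum.inr‖ ‖R.submatrix Sum.inr id‖ ^ 2 / gap)) *
        (1 + max ‖R.submatrix Sum.inr id‖ ‖S.submatrix id Sum.inr‖ / gap) :=
  svd_subspace_refined_bound_general σ1hat Sig2hat R S A3 U V hU hV σ1 hAV hAU Gap gap hGapDef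
    hgapDef hgap hGap
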